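/- (Logarithmic Sobolev-type inequality, Lemma 3.3.) Let p ∈ (3, ∞) and q ∈ [1, ∞). There exists a constant C depending only on p and q such that: for all real numbers s < t and every function f : (s,t) × ℝ³ → ℝ such that for almost every τ ∈ (s,t) the function f(τ,·) is continuously differentiable, and such that the functions τ ↦ ‖f(τ,·)‖_{L^∞(ℝ³)}, τ ↦ [f(τ,·)]_{BMO}, τ ↦ ‖f(τ,·)‖_{L^q(ℝ³)} and τ ↦ ‖∇f(τ,·)‖_{L^p(ℝ³)} are finite almost everywhere and integrable on (s,t), one has ∫ₛᵗ ‖f(τ,·)‖_{L^∞(ℝ³)} dτ ≤ C [ (∫ₛᵗ [f(τ,·)]_{BMO} dτ) · ln(1 + ∫ₛᵗ ‖∇f(τ,·)‖_{L^p(ℝ³)} dτ) + ∫ₛᵗ ‖f(τ,·)‖_{L^q(ℝ³)} dτ + 1 ]. -/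

import Mathlib

open MeasureTheory

noncomputable section

/-- Euclidean three-space. -/
abbrev E3 := EuclideanSpace ℝ (Fin 3)

/-- The set of averages over balls of |g − (average of g)|, whose supremum is the BMO
seminorm of g. -/
def bmoSet (g : E3 → ℝ) : Set ℝ :=
  { m : ℝ | ∃ (x : E3) (ρ : ℝ), 0 < ρ ∧
      m = ⨍ y in Metric.ball x ρ, |g y - ⨍ z in Metric.ball x ρ, g z| }

/-- The BMO seminorm of g : ℝ³ → ℝ, the supremum over all centers x and radii ρ > 0 of
the average over B_ρ(x) of |g − g_{B_ρ(x)}|. -/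
def bmoSeminorm (g : E3 → ℝ) : ℝ := sSup (bmoSet g)

/-!
For fixed time and `r = 2⁻ᵏ`, split `|g x|` into `|g x - g_{B(x,r)}|`, the `k` dyadic steps
`|g_{B(x,2⁻ʲ⁻¹)} - g_{B(x,2⁻ʲ)}|`, and `|g_{B(x,1)}|`. Morrey's estimate bounds the first term by
`C r^(1-3/p) ‖∇g‖_p`, each dyadic step costs at most `2³ [g]_BMO`, and Hölder bounds the unit-ball
average by `C ‖g‖_q`. After integrating in time, `k ≈ log₂ (1 + ∫ ‖∇f‖_p) / (1 - 3/p)` makes the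
Morrey term bounded and turns the BMO term into the logarithm.
-/

open Metric Set Module
open scoped ENNReal

namespace MeasureTheory

variable {X F : Type*} [MeasurableSpace X] {μ : Measure X} {s t : Set X} [NormedAddCommGroup F]

theorem setLAverage_enorm_le_measure_rpow_mul_eLpNorm {f : X → F} {p : ℝ≥0∞} (hp : 1 ≤ p)
    (hf : AEStronglyMeasurable f μ) (hs₀ : μ s ≠ 0) (hs : μ s ≠ ∞) :
    ⨍⁻ x in s, ‖f x‖ₑ ∂μ ≤ μ s ^ (-1 / p.toReal) * eLpNorm f p μ := by
  have holder : ∫⁻ x in s, ‖f x‖ₑ ∂μ ≤ eLpNorm f p μ * μ s ^ (1 - 1 / p.toReal) := by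
    rw [← eLpNorm_one_eq_lintegral_enorm (f := f) (μ := μ.restrict s)]
    refine (eLpNorm_le_eLpNorm_mul_rpow_measure_univ hp hf.restrict).trans ?_
    rw [Measure.restrict_apply_univ, ENNReal.toReal_one, div_one]
    gcongr
    exact Measure.restrict_le_self
  calc ⨍⁻ x in s, ‖f x‖ₑ ∂μ ≤ eLpNorm f p μ * μ s ^ (1 - 1 / p.toReal) * μ s ^ (-1 : ℝ) := by
        rw [setLAverage_eq, ENNReal.div_eq_inv_mul, ENNReal.rpow_neg_one, mul_comm]
        gcongr
    _ = μ s ^ (-1 / p.toReal) * eLpNorm f p μ := by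
        rw [mul_assoc, ← ENNReal.rpow_add _ _ hs₀ hs, mul_comm]
        ring_nf

variable [NormedSpace ℝ F]

theorem enorm_setAverage_le_setLAverage_enorm (f : X → F) (s : Set X) :
    ‖⨍ x in s, f x ∂μ‖ₑ ≤ ⨍⁻ x in s, ‖f x‖ₑ ∂μ := by
  rw [setAverage_eq, setLAverage_eq, enorm_smul, ENNReal.div_eq_inv_mul, measureReal_def,
    ← ENNReal.toReal_inv]
  gcongr
  · exact (Real.enorm_of_nonneg ENNReal.toReal_nonneg).trans_le ENNReal.ofReal_toReal_le
  · exact enorm_integral_le_lintegral_enorm _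

theorem norm_setAverage_le_measureReal_rpow_mul_eLpNorm {f : X → F} {p : ℝ≥0∞} (hp : 1 ≤ p)
    (hf : AEStronglyMeasurable f μ) (hfp : eLpNorm f p μ ≠ ∞) (hs₀ : μ s ≠ 0) (hs : μ s ≠ ∞) :
    ‖⨍ x in s, f x ∂μ‖ ≤ μ.real s ^ (-1 / p.toReal) * (eLpNorm f p μ).toReal := by
  have h := (enorm_setAverage_le_setLAverage_enorm f s).trans
    (setLAverage_enorm_le_measure_rpow_mul_eLpNorm hp hf hs₀ hs)
  have hfin : μ s ^ (-1 / p.toReal) * eLpNorm f p μ ≠ ∞ :=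
    ENNReal.mul_ne_top (ENNReal.rpow_ne_top_of_ne_zero hs₀ hs) hfp
  simpa [ENNReal.toReal_rpow, measureReal_def] using ENNReal.toReal_mono hfin h

variable [CompleteSpace F]

theorem setAverage_sub_const {f : X → F} (hs₀ : μ s ≠ 0) (hs : μ s ≠ ∞)
    (hf : IntegrableOn f s μ) (c : F) :
    ⨍ x in s, (f x - c) ∂μ = ⨍ x in s, f x ∂μ - c := by
  have hs' : μ.real s ≠ 0 := ENNReal.toReal_ne_zero.2 ⟨hs₀, hs⟩
  rw [setAverage_eq, setAverage_eq, integral_sub hf (integrableOn_const hs), setIntegral_const,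
    smul_sub, smul_smul, inv_mul_cancel₀ hs', one_smul]

theorem abs_setAverage_le_setAverage_abs (g : X → ℝ) (s : Set X) :
    |⨍ x in s, g x ∂μ| ≤ ⨍ x in s, |g x| ∂μ := by
  rw [setAverage_eq, setAverage_eq, smul_eq_mul, smul_eq_mul, abs_mul,
    abs_of_nonneg (inv_nonneg.2 measureReal_nonneg)]
  gcongr
  exact abs_integral_le_integral_abs

theorem abs_setAverage_sub_setAverage_le {g : X → ℝ} (hst : s ⊆ t) (hs₀ : μ s ≠ 0)
    (ht : μ t ≠ ∞) (hg : IntegrableOn g t μ) :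
    |⨍ x in s, g x ∂μ - ⨍ x in t, g x ∂μ| ≤
      μ.real t / μ.real s * ⨍ x in t, |g x - ⨍ y in t, g y ∂μ| ∂μ := by
  set c := ⨍ y in t, g y ∂μ
  have hs : μ s ≠ ∞ := ne_top_of_le_ne_top ht (measure_mono hst)
  have ht₀ : μ.real t ≠ 0 :=
    ENNReal.toReal_ne_zero.2 ⟨fun h => hs₀ (measure_mono_null hst h), ht⟩
  rw [← setAverage_sub_const hs₀ hs (hg.mono_set hst)]
  refine (abs_setAverage_le_setAverage_abs _ _).trans ?_
  rw [setAverage_eq, setAverage_eq, smul_eq_mul, smul_eq_mul, div_mul_eq_mul_div,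
    mul_inv_cancel_left₀ ht₀, div_eq_inv_mul]
  gcongr
  · exact Filter.Eventually.of_forall fun _ => abs_nonneg _
  · exact (hg.sub (integrableOn_const ht)).abs

end MeasureTheory

theorem Continuous.integrableOn_ball {X G : Type*} [PseudoMetricSpace X] [ProperSpace X]
    [MeasurableSpace X] [OpensMeasurableSpace X] {μ : Measure X} [IsFiniteMeasureOnCompacts μ]
    [NormedAddCommGroup G] {g : X → G} (hg : Continuous g) (x : X) (r : ℝ) :
    IntegrableOn g (ball x r) μ :=
  (hg.locallyIntegrable.integrableOn_isCompact (isCompact_closedBall x r)).mono_set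
    ball_subset_closedBall

theorem lintegral_Ioc_zero_one_rpow {a : ℝ} (ha : -1 < a) :
    ∫⁻ t in Ioc (0 : ℝ) 1, ENNReal.ofReal (t ^ a) = ENNReal.ofReal (a + 1)⁻¹ := by
  have hint := (intervalIntegral.intervalIntegrable_rpow' (a := 0) (b := 1) ha).1
  rw [← ofReal_integral_eq_lintegral_ofReal hint, ← intervalIntegral.integral_of_le zero_le_one,
    integral_rpow (Or.inl ha), Real.zero_rpow (by linarith), Real.one_rpow, sub_zero, one_div]
  filter_upwards [ae_restrict_mem measurableSet_Ioc] with t ht using Real.rpow_nonneg ht.1.le a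

section Morrey

variable {E F : Type*} [NormedAddCommGroup E] [NormedSpace ℝ E] [NormedAddCommGroup F]
  [NormedSpace ℝ F] [CompleteSpace F]

theorem enorm_sub_le_mul_lintegral_enorm_fderiv {g : E → F} (hg : ContDiff ℝ 1 g) (x y : E) :
    ‖g y - g x‖ₑ ≤ ‖y - x‖ₑ * ∫⁻ t in Ioc (0 : ℝ) 1, ‖fderiv ℝ g (x + t • (y - x))‖ₑ := by
  set γ : ℝ → E := fun t => x + t • (y - x)
  have hγ (t : ℝ) : HasDerivAt γ (y - x) t := by
    simpa only [one_smul] using ((hasDerivAt_id' t).smul_const (y - x)).const_add x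
  have hDg : Continuous fun t => fderiv ℝ g (γ t) (y - x) :=
    ((hg.continuous_fderiv one_ne_zero).comp (by fun_prop)).clm_apply continuous_const
  have ftc : g y - g x = ∫ t in (0 : ℝ)..1, fderiv ℝ g (γ t) (y - x) := by
    rw [intervalIntegral.integral_eq_sub_of_hasDerivAt (fun t _ =>
      (hg.differentiable one_ne_zero (γ t)).hasFDerivAt.comp_hasDerivAt t (hγ t))
      (hDg.intervalIntegrable 0 1)]
    simp [γ]
  calc ‖g y - g x‖ₑ ≤ ∫⁻ t in Ioc (0 : ℝ) 1, ‖fderiv ℝ g (γ t) (y - x)‖ₑ := by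
        rw [ftc, intervalIntegral.integral_of_le zero_le_one]
        exact enorm_integral_le_lintegral_enorm _
    _ ≤ ∫⁻ t in Ioc (0 : ℝ) 1, ‖fderiv ℝ g (γ t)‖ₑ * ‖y - x‖ₑ :=
        lintegral_mono fun t => ContinuousLinearMap.le_opENorm _ _
    _ = _ := by rw [lintegral_mul_const' _ _ enorm_ne_top, mul_comm]

variable [MeasurableSpace E] [BorelSpace E] [FiniteDimensional ℝ E] (μ : Measure E)
  [μ.IsAddHaarMeasure]

theorem MeasureTheory.Measure.addHaar_real_ball_of_pos (x : E) {r : ℝ} (hr : 0 < r) :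
    μ.real (ball x r) = r ^ finrank ℝ E * μ.real (ball (0 : E) 1) := by
  rw [measureReal_def, Measure.addHaar_ball_of_pos μ x hr, ENNReal.toReal_mul,
    ENNReal.toReal_ofReal (by positivity), measureReal_def]

theorem lintegral_comp_homothety (φ : E → ℝ≥0∞) (x : E) {t : ℝ} (ht : t ≠ 0) :
    ∫⁻ y, φ (x + t • (y - x)) ∂μ = ENNReal.ofReal |(t ^ finrank ℝ E)⁻¹| * ∫⁻ z, φ z ∂μ := by
  let e := (Homeomorph.smul (Units.mk0 t ht) : E ≃ₜ E).toMeasurableEquiv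
  rw [lintegral_sub_right_eq_self (fun z => φ (x + t • z)) x,
    ← lintegral_add_left_eq_self φ x, ← smul_eq_mul, ← lintegral_smul_measure,
    ← Measure.map_addHaar_smul μ ht]
  exact (lintegral_map_equiv (fun z => φ (x + z)) e).symm

theorem setLAverage_ball_comp_homothety (φ : E → ℝ≥0∞) (x : E) {t : ℝ} (ht : 0 < t) (r : ℝ) :
    ⨍⁻ y in ball x r, φ (x + t • (y - x)) ∂μ = ⨍⁻ z in ball x (t * r), φ z ∂μ := by
  have hind (y : E) : (ball x r).indicator (fun y => φ (x + t • (y - x))) y =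
      (ball x (t * r)).indicator φ (x + t • (y - x)) := by
    simp only [indicator, mem_ball, dist_eq_norm, add_sub_cancel_left, norm_smul,
      Real.norm_of_nonneg ht.le, mul_lt_mul_iff_right₀ ht]
  have htd : ENNReal.ofReal (t ^ finrank ℝ E) ≠ 0 := by simp [ht]
  rw [setLAverage_eq, setLAverage_eq, ← lintegral_indicator measurableSet_ball,
    ← lintegral_indicator measurableSet_ball, funext hind, lintegral_comp_homothety μ _ x ht.ne',
    Measure.addHaar_ball_mul_of_pos μ x ht, ← Measure.addHaar_ball_center μ x,
    abs_of_pos (by positivity), ENNReal.ofReal_inv_of_pos (by positivity),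
    ENNReal.div_eq_inv_mul, ENNReal.div_eq_inv_mul,
    ENNReal.mul_inv (Or.inl htd) (Or.inl ENNReal.ofReal_ne_top), mul_assoc, mul_left_comm]

theorem setLAverage_ball_enorm_sub_le_lintegral_setLAverage {g : E → F} (hg : ContDiff ℝ 1 g)
    (x : E) {r : ℝ} :
    ⨍⁻ y in ball x r, ‖g y - g x‖ₑ ∂μ ≤
      ENNReal.ofReal r * ∫⁻ t in Ioc (0 : ℝ) 1, ⨍⁻ z in ball x (t * r), ‖fderiv ℝ g z‖ₑ ∂μ := by
  calc ⨍⁻ y in ball x r, ‖g y - g x‖ₑ ∂μ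
      ≤ ⨍⁻ y in ball x r,
          ENNReal.ofReal r * (∫⁻ t in Ioc (0 : ℝ) 1, ‖fderiv ℝ g (x + t • (y - x))‖ₑ) ∂μ := by
        refine laverage_mono_ae ((ae_restrict_iff' measurableSet_ball).2 (ae_of_all _ ?_))
        intro y hy
        have hyx : ‖y - x‖ₑ ≤ ENNReal.ofReal r := by
          rw [← ofReal_norm, ← dist_eq_norm]
          exact ENNReal.ofReal_le_ofReal (mem_ball.1 hy).le
        exact (enorm_sub_le_mul_lintegral_enorm_fderiv hg x y).trans (mul_le_mul_left hyx _)
    _ = ENNReal.ofReal r *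
          ∫⁻ t in Ioc (0 : ℝ) 1, ⨍⁻ y in ball x r, ‖fderiv ℝ g (x + t • (y - x))‖ₑ ∂μ := by
        simp_rw [setLAverage_eq']
        rw [lintegral_const_mul' _ _ ENNReal.ofReal_ne_top, lintegral_lintegral_swap]
        exact ((hg.continuous_fderiv one_ne_zero).comp (by fun_prop)).enorm.aemeasurable
    _ = _ := by
        congr 1
        exact setLIntegral_congr_fun measurableSet_Ioc fun t ht =>
          setLAverage_ball_comp_homothety μ (fun z => ‖fderiv ℝ g z‖ₑ) x ht.1 r

theorem setLAverage_ball_enorm_sub_le_eLpNorm_fderiv {p : ℝ} (hp₁ : 1 ≤ p)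
    (hp : finrank ℝ E < p) {g : E → F} (hg : ContDiff ℝ 1 g) (x : E) {r : ℝ} (hr : 0 < r) :
    ⨍⁻ y in ball x r, ‖g y - g x‖ₑ ∂μ ≤
      ENNReal.ofReal (p / (p - finrank ℝ E) * r) * μ (ball x r) ^ (-1 / p) *
        eLpNorm (fderiv ℝ g) (ENNReal.ofReal p) μ := by
  set N := eLpNorm (fderiv ℝ g) (ENNReal.ofReal p) μ
  have hp₀ : 0 < p := lt_of_le_of_lt (Nat.cast_nonneg _) hp
  have hball {ρ : ℝ} (hρ : 0 < ρ) : μ (ball x ρ) ≠ 0 := (measure_ball_pos μ x hρ).ne'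
  calc _ ≤ _ := setLAverage_ball_enorm_sub_le_lintegral_setLAverage μ hg x
    _ ≤ ENNReal.ofReal r * ∫⁻ t in Ioc (0 : ℝ) 1, μ (ball x (t * r)) ^ (-1 / p) * N := by
        gcongr 1
        refine setLIntegral_mono' measurableSet_Ioc fun t ht => ?_
        have := setLAverage_enorm_le_measure_rpow_mul_eLpNorm (p := ENNReal.ofReal p)
          (by simpa using hp₁) (hg.continuous_fderiv one_ne_zero).aestronglyMeasurable
          (hball (mul_pos ht.1 hr)) measure_ball_lt_top.ne
        rwa [ENNReal.toReal_ofReal hp₀.le] at this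
    _ = ENNReal.ofReal r * ∫⁻ t in Ioc (0 : ℝ) 1,
          ENNReal.ofReal (t ^ (-(finrank ℝ E : ℝ) / p)) * (μ (ball x r) ^ (-1 / p) * N) := by
        congr 1
        refine setLIntegral_congr_fun measurableSet_Ioc fun t ht => ?_
        rw [Measure.addHaar_ball_mul_of_pos μ x ht.1, ← Measure.addHaar_ball_center μ x,
          ENNReal.mul_rpow_of_ne_zero (by simp [ht.1]) (hball hr),
          ENNReal.ofReal_rpow_of_pos (pow_pos ht.1 _), ← Real.rpow_natCast,
          ← Real.rpow_mul ht.1.le, mul_assoc,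
          show (finrank ℝ E : ℝ) * (-1 / p) = -(finrank ℝ E : ℝ) / p by ring]
    _ = _ := by
        have hd : -1 < -(finrank ℝ E : ℝ) / p := by
          rwa [neg_div, neg_lt_neg_iff, div_lt_one hp₀]
        have hconst : (-(finrank ℝ E : ℝ) / p + 1)⁻¹ = p / (p - finrank ℝ E) := by
          rw [show -(finrank ℝ E : ℝ) / p + 1 = (p - finrank ℝ E) / p by field_simp; ring, inv_div]
        rw [lintegral_mul_const _ (by fun_prop), lintegral_Ioc_zero_one_rpow hd, hconst,
          ENNReal.ofReal_mul (by positivity)]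
        ring

theorem norm_sub_setAverage_ball_le_eLpNorm_fderiv {p : ℝ} (hp₁ : 1 ≤ p)
    (hp : finrank ℝ E < p) {g : E → F} (hg : ContDiff ℝ 1 g)
    (hDg : eLpNorm (fderiv ℝ g) (ENNReal.ofReal p) μ ≠ ∞) (x : E) {r : ℝ} (hr : 0 < r) :
    ‖g x - ⨍ y in ball x r, g y ∂μ‖ ≤
      p / (p - finrank ℝ E) * μ.real (ball (0 : E) 1) ^ (-1 / p) * r ^ (1 - finrank ℝ E / p) *
        (eLpNorm (fderiv ℝ g) (ENNReal.ofReal p) μ).toReal := by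
  have h₀ : μ (ball x r) ≠ 0 := (measure_ball_pos μ x hr).ne'
  have hp_sub : 0 < p - finrank ℝ E := by linarith
  have hfin : ENNReal.ofReal (p / (p - finrank ℝ E) * r) * μ (ball x r) ^ (-1 / p) *
      eLpNorm (fderiv ℝ g) (ENNReal.ofReal p) μ ≠ ∞ :=
    ENNReal.mul_ne_top (ENNReal.mul_ne_top ENNReal.ofReal_ne_top
      (ENNReal.rpow_ne_top_of_ne_zero h₀ measure_ball_lt_top.ne)) hDg
  have h := ENNReal.toReal_mono hfin ((enorm_setAverage_le_setLAverage_enorm _ _).trans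
    (setLAverage_ball_enorm_sub_le_eLpNorm_fderiv μ hp₁ hp hg x hr))
  rw [toReal_enorm] at h
  rw [norm_sub_rev,
    ← setAverage_sub_const h₀ measure_ball_lt_top.ne (hg.continuous.integrableOn_ball x r)]
  refine h.trans_eq ?_
  rw [ENNReal.toReal_mul, ENNReal.toReal_mul, ENNReal.toReal_ofReal (by positivity),
    ← ENNReal.toReal_rpow, ← measureReal_def, Measure.addHaar_real_ball_of_pos μ x hr,
    Real.mul_rpow (by positivity) measureReal_nonneg, ← Real.rpow_natCast, ← Real.rpow_mul hr.le,
    show (finrank ℝ E : ℝ) * (-1 / p) = -(finrank ℝ E / p) by ring, Real.rpow_neg hr.le,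
    Real.rpow_sub hr, Real.rpow_one]
  ring

end Morrey

theorem bmoSeminorm_nonneg (g : E3 → ℝ) : 0 ≤ bmoSeminorm g :=
  Real.sSup_nonneg fun _ ⟨_, _, _, hm⟩ => by
    rw [hm, setAverage_eq']
    exact integral_nonneg fun _ => abs_nonneg _

theorem setAverage_le_bmoSeminorm {g : E3 → ℝ} (hg : BddAbove (bmoSet g)) (x : E3) {ρ : ℝ}
    (hρ : 0 < ρ) : ⨍ y in ball x ρ, |g y - ⨍ z in ball x ρ, g z| ≤ bmoSeminorm g :=
  le_csSup hg ⟨x, ρ, hρ, rfl⟩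

theorem abs_setAverage_ball_half_sub_le {g : E3 → ℝ} (hg : Continuous g)
    (hB : BddAbove (bmoSet g)) (x : E3) {ρ : ℝ} (hρ : 0 < ρ) :
    |(⨍ y in ball x (ρ / 2), g y) - ⨍ y in ball x ρ, g y| ≤ 8 * bmoSeminorm g := by
  have hratio : volume.real (ball x ρ) / volume.real (ball x (ρ / 2)) = 8 := by
    have hv : 0 < volume.real (ball (0 : E3) 1) :=
      ENNReal.toReal_pos (measure_ball_pos _ _ one_pos).ne' measure_ball_lt_top.ne
    rw [Measure.addHaar_real_ball_of_pos volume x hρ,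
      Measure.addHaar_real_ball_of_pos volume x (half_pos hρ), finrank_euclideanSpace_fin]
    field_simp
    ring
  calc _ ≤ _ := abs_setAverage_sub_setAverage_le (ball_subset_ball (half_le_self hρ.le))
        (measure_ball_pos volume x (half_pos hρ)).ne' measure_ball_lt_top.ne
        (hg.integrableOn_ball x ρ)
    _ ≤ 8 * bmoSeminorm g := by
        rw [hratio]
        gcongr
        exact setAverage_le_bmoSeminorm hB x hρ

theorem abs_setAverage_ball_dyadic_sub_le {g : E3 → ℝ} (hg : Continuous g)
    (hB : BddAbove (bmoSet g)) (x : E3) (k : ℕ) :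
    |(⨍ y in ball x ((2 : ℝ)⁻¹ ^ k), g y) - ⨍ y in ball x 1, g y| ≤ 8 * k * bmoSeminorm g := by
  induction k with
  | zero => simp
  | succ k ih =>
    have hstep := abs_setAverage_ball_half_sub_le hg hB x (pow_pos (inv_pos.2 two_pos) k)
    rw [div_eq_mul_inv, ← pow_succ] at hstep
    calc _ ≤ _ := abs_sub_le _ (⨍ y in ball x ((2 : ℝ)⁻¹ ^ k), g y) _
      _ ≤ 8 * bmoSeminorm g + 8 * k * bmoSeminorm g := add_le_add hstep ih
      _ = 8 * (k + 1 : ℕ) * bmoSeminorm g := by push_cast; ring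

theorem toReal_eLpNorm_top_le_of_contDiff {p q : ℝ} (hp : 3 < p) (hq : 1 ≤ q) {g : E3 → ℝ}
    (hg : ContDiff ℝ 1 g) (hB : BddAbove (bmoSet g))
    (hgq : eLpNorm g (ENNReal.ofReal q) volume < ⊤)
    (hDg : eLpNorm (fun x => ‖fderiv ℝ g x‖) (ENNReal.ofReal p) volume < ⊤) (k : ℕ) :
    (eLpNorm g ⊤ volume).toReal ≤
      volume.real (ball (0 : E3) 1) ^ (-1 / q) * (eLpNorm g (ENNReal.ofReal q) volume).toReal +
        8 * k * bmoSeminorm g +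
        p / (p - 3) * volume.real (ball (0 : E3) 1) ^ (-1 / p) * ((2 : ℝ)⁻¹ ^ k) ^ (1 - 3 / p) *
          (eLpNorm (fun x => ‖fderiv ℝ g x‖) (ENNReal.ofReal p) volume).toReal := by
  rw [eLpNorm_norm] at hDg ⊢
  set M := volume.real (ball (0 : E3) 1) ^ (-1 / q) *
      (eLpNorm g (ENNReal.ofReal q) volume).toReal + 8 * k * bmoSeminorm g +
    p / (p - 3) * volume.real (ball (0 : E3) 1) ^ (-1 / p) * ((2 : ℝ)⁻¹ ^ k) ^ (1 - 3 / p) *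
      (eLpNorm (fderiv ℝ g) (ENNReal.ofReal p) volume).toReal with hM_def
  have hbound (x : E3) : |g x| ≤ M := by
    have morrey := norm_sub_setAverage_ball_le_eLpNorm_fderiv volume (by linarith)
      (by simpa using hp) hg hDg.ne x (show 0 < (2 : ℝ)⁻¹ ^ k by positivity)
    have dyadic := abs_setAverage_ball_dyadic_sub_le hg.continuous hB x k
    have unit := norm_setAverage_le_measureReal_rpow_mul_eLpNorm (μ := volume) (s := ball x 1)
      (by simpa using hq) hg.continuous.aestronglyMeasurable hgq.ne
      (measure_ball_pos _ _ one_pos).ne' measure_ball_lt_top.ne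
    rw [finrank_euclideanSpace_fin, Nat.cast_ofNat, Real.norm_eq_abs] at morrey
    rw [Measure.addHaar_real_ball_center, ENNReal.toReal_ofReal (by linarith),
      Real.norm_eq_abs] at unit
    calc |g x| ≤ |g x - ⨍ y in ball x ((2 : ℝ)⁻¹ ^ k), g y| +
          |(⨍ y in ball x ((2 : ℝ)⁻¹ ^ k), g y) - ⨍ y in ball x 1, g y| + |⨍ y in ball x 1, g y| :=
          (congrArg abs (by ring)).trans_le (abs_add_three _ _ _)
      _ ≤ M := by rw [hM_def]; linarith
  refine ENNReal.toReal_le_of_le_ofReal ((abs_nonneg _).trans (hbound 0)) ?_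
  rw [eLpNorm_exponent_top]
  exact eLpNormEssSup_le_of_ae_bound (ae_of_all _ hbound)

theorem integral_toReal_eLpNorm_top_le_of_contDiff {p q : ℝ} (hp : 3 < p) (hq : 1 ≤ q)
    {T : Type*} [MeasurableSpace T] {ν : Measure T} {f : T → E3 → ℝ}
    (hf : ∀ᵐ τ ∂ν, ContDiff ℝ 1 (f τ))
    (hfin : ∀ᵐ τ ∂ν, BddAbove (bmoSet (f τ)) ∧ eLpNorm (f τ) (ENNReal.ofReal q) volume < ⊤ ∧
      eLpNorm (fun x => ‖fderiv ℝ (f τ) x‖) (ENNReal.ofReal p) volume < ⊤)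
    (hLinf : Integrable (fun τ => (eLpNorm (f τ) ⊤ volume).toReal) ν)
    (hbmo : Integrable (fun τ => bmoSeminorm (f τ)) ν)
    (hLq : Integrable (fun τ => (eLpNorm (f τ) (ENNReal.ofReal q) volume).toReal) ν)
    (hLp : Integrable
      (fun τ => (eLpNorm (fun x => ‖fderiv ℝ (f τ) x‖) (ENNReal.ofReal p) volume).toReal) ν)
    (k : ℕ) :
    ∫ τ, (eLpNorm (f τ) ⊤ volume).toReal ∂ν ≤
      volume.real (ball (0 : E3) 1) ^ (-1 / q) *
          ∫ τ, (eLpNorm (f τ) (ENNReal.ofReal q) volume).toReal ∂ν +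
        8 * k * ∫ τ, bmoSeminorm (f τ) ∂ν +
        p / (p - 3) * volume.real (ball (0 : E3) 1) ^ (-1 / p) * ((2 : ℝ)⁻¹ ^ k) ^ (1 - 3 / p) *
          ∫ τ, (eLpNorm (fun x => ‖fderiv ℝ (f τ) x‖) (ENNReal.ofReal p) volume).toReal ∂ν := by
  set cq := volume.real (ball (0 : E3) 1) ^ (-1 / q)
  set cp := p / (p - 3) * volume.real (ball (0 : E3) 1) ^ (-1 / p) * ((2 : ℝ)⁻¹ ^ k) ^ (1 - 3 / p)
  have hqb : Integrable (fun τ => cq * (eLpNorm (f τ) (ENNReal.ofReal q) volume).toReal +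
      8 * k * bmoSeminorm (f τ)) ν := (hLq.const_mul _).add (hbmo.const_mul _)
  calc _ ≤ ∫ τ, (cq * (eLpNorm (f τ) (ENNReal.ofReal q) volume).toReal + 8 * k * bmoSeminorm (f τ) +
        cp * (eLpNorm (fun x => ‖fderiv ℝ (f τ) x‖) (ENNReal.ofReal p) volume).toReal) ∂ν := by
        refine integral_mono_ae hLinf (hqb.add (hLp.const_mul _)) ?_
        filter_upwards [hf, hfin] with τ hτ ⟨hB, hgq, hDg⟩
        exact toReal_eLpNorm_top_le_of_contDiff hp hq hτ hB hgq hDg k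
    _ = _ := by
        rw [integral_add hqb (hLp.const_mul _), integral_add (hLq.const_mul _) (hbmo.const_mul _),
          integral_const_mul, integral_const_mul, integral_const_mul]

theorem exists_nat_le_log_div_and_rpow_mul_le {α N : ℝ} (hα : 0 < α) (hN : 0 ≤ N) :
    ∃ k : ℕ, (k : ℝ) ≤ Real.log (1 + N) / (α * Real.log 2) ∧ ((2 : ℝ)⁻¹ ^ k) ^ α * N ≤ 2 ^ α := by
  have hlog2 : 0 < Real.log 2 := Real.log_pos one_lt_two
  set L := Real.log (1 + N) / (α * Real.log 2)
  have hL : 0 ≤ L := div_nonneg (Real.log_nonneg (by linarith)) (by positivity)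
  refine ⟨⌊L⌋₊, Nat.floor_le hL, ?_⟩
  have hlog : Real.log (1 + N) < (⌊L⌋₊ + 1) * α * Real.log 2 := by
    have := Nat.lt_floor_add_one L
    rwa [div_lt_iff₀ (by positivity), ← mul_assoc] at this
  have hN' : N < 2 ^ ((⌊L⌋₊ + 1) * α) := by
    rw [Real.rpow_def_of_pos two_pos, mul_comm (Real.log 2)]
    linarith [Real.exp_log (show 0 < 1 + N by linarith), Real.exp_lt_exp.2 hlog]
  have hpow : ((2 : ℝ)⁻¹ ^ ⌊L⌋₊) ^ α = 2 ^ (-(⌊L⌋₊ * α)) := by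
    rw [inv_pow, Real.inv_rpow (by positivity), ← Real.rpow_natCast, ← Real.rpow_mul zero_le_two,
      Real.rpow_neg zero_le_two]
  calc ((2 : ℝ)⁻¹ ^ ⌊L⌋₊) ^ α * N ≤ 2 ^ (-(⌊L⌋₊ * α)) * 2 ^ ((⌊L⌋₊ + 1) * α) := by
        rw [hpow]
        gcongr
    _ = 2 ^ α := by
        rw [← Real.rpow_add two_pos]
        ring_nf

theorem le_mul_log_one_add_of_forall_nat_le {α a c L A B N : ℝ} (hα : 0 < α) (ha : 0 ≤ a)
    (hc : 0 ≤ c) (hA : 0 ≤ A) (hB : 0 ≤ B) (hN : 0 ≤ N)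
    (h : ∀ k : ℕ, L ≤ a * B + 8 * k * A + c * ((2 : ℝ)⁻¹ ^ k) ^ α * N) :
    L ≤ (a + 8 / (α * Real.log 2) + c * 2 ^ α) * (A * Real.log (1 + N) + B + 1) := by
  obtain ⟨k, hk, hkN⟩ := exists_nat_le_log_div_and_rpow_mul_le hα hN
  have hb : 0 ≤ 8 / (α * Real.log 2) := by
    have := Real.log_pos one_lt_two
    positivity
  have hc' : 0 ≤ c * 2 ^ α := by positivity
  have hX : 0 ≤ A * Real.log (1 + N) := mul_nonneg hA (Real.log_nonneg (by linarith))
  calc L ≤ a * B + 8 * k * A + c * (((2 : ℝ)⁻¹ ^ k) ^ α * N) := by linarith [h k]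
    _ ≤ a * B + 8 * (Real.log (1 + N) / (α * Real.log 2)) * A + c * 2 ^ α := by gcongr
    _ = a * B + 8 / (α * Real.log 2) * (A * Real.log (1 + N)) + c * 2 ^ α := by ring
    _ ≤ _ := by nlinarith [mul_nonneg ha hX, mul_nonneg hb hB, mul_nonneg hc' hX, mul_nonneg hc' hB]

/-- logarithmic Sobolev-type inequality, Lemma 3.3: for p ∈ (3,∞) and
q ∈ [1,∞) there is a constant C depending only on p and q such that for all s < t and
every f : (s,t) × ℝ³ → ℝ which is C¹ in the space variable for a.e. time, with the
L^∞, BMO, L^q and gradient-L^p norms finite a.e. and integrable in time on (s,t),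
∫ₛᵗ ‖f(τ)‖_{L^∞} dτ ≤ C[(∫ₛᵗ [f(τ)]_BMO dτ) ln(1 + ∫ₛᵗ ‖∇f(τ)‖_{L^p} dτ)
  + ∫ₛᵗ ‖f(τ)‖_{L^q} dτ + 1]. -/
theorem log_sobolev_type_inequality (p q : ℝ) (hp : 3 < p) (hq : 1 ≤ q) :
    ∃ C : ℝ, ∀ s t : ℝ, s < t → ∀ f : ℝ → E3 → ℝ,
      (∀ᵐ τ ∂(volume.restrict (Set.Ioo s t)), ContDiff ℝ 1 (f τ)) →
      (∀ᵐ τ ∂(volume.restrict (Set.Ioo s t)),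
          eLpNorm (f τ) ⊤ volume < ⊤ ∧
          BddAbove (bmoSet (f τ)) ∧
          eLpNorm (f τ) (ENNReal.ofReal q) volume < ⊤ ∧
          eLpNorm (fun x => ‖fderiv ℝ (f τ) x‖) (ENNReal.ofReal p) volume < ⊤) →
      IntegrableOn (fun τ => (eLpNorm (f τ) ⊤ volume).toReal) (Set.Ioo s t) →
      IntegrableOn (fun τ => bmoSeminorm (f τ)) (Set.Ioo s t) →
      IntegrableOn (fun τ => (eLpNorm (f τ) (ENNReal.ofReal q) volume).toReal)
        (Set.Ioo s t) →
      IntegrableOn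
        (fun τ => (eLpNorm (fun x => ‖fderiv ℝ (f τ) x‖) (ENNReal.ofReal p) volume).toReal)
        (Set.Ioo s t) →
      ∫ τ in Set.Ioo s t, (eLpNorm (f τ) ⊤ volume).toReal ≤
        C * ((∫ τ in Set.Ioo s t, bmoSeminorm (f τ)) *
              Real.log (1 + ∫ τ in Set.Ioo s t,
                (eLpNorm (fun x => ‖fderiv ℝ (f τ) x‖) (ENNReal.ofReal p) volume).toReal)
            + (∫ τ in Set.Ioo s t, (eLpNorm (f τ) (ENNReal.ofReal q) volume).toReal)
            + 1) := by
  have hα : 0 < 1 - 3 / p := by linarith [(div_lt_one (by linarith : (0 : ℝ) < p)).2 hp]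
  have hv (a : ℝ) : 0 ≤ volume.real (ball (0 : E3) 1) ^ a :=
    Real.rpow_nonneg measureReal_nonneg a
  refine ⟨volume.real (ball (0 : E3) 1) ^ (-1 / q) + 8 / ((1 - 3 / p) * Real.log 2) +
    p / (p - 3) * volume.real (ball (0 : E3) 1) ^ (-1 / p) * 2 ^ (1 - 3 / p),
    fun s t _ f hC1 hfin hLinf hbmo hLq hLp => ?_⟩
  refine le_mul_log_one_add_of_forall_nat_le hα (hv _)
    (mul_nonneg (div_nonneg (by linarith) (by linarith)) (hv _))
    (integral_nonneg fun _ => bmoSeminorm_nonneg _) (integral_nonneg fun _ => ENNReal.toReal_nonneg)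
    (integral_nonneg fun _ => ENNReal.toReal_nonneg) fun k => ?_
  exact integral_toReal_eLpNorm_top_le_of_contDiff hp hq hC1 (hfin.mono fun _ h => h.2) hLinf
    hbmo hLq hLp k

end
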